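/- Let N ≥ 1 and k ≥ 1 be integers, let Q be a real k×k matrix, and let H = I_{N+1} ⊗ I_k + P ⊗ Q, where ⊗ denotes the Kronecker product and I_m the m×m identity matrix. Then H is invertible if and only if the matrix T₁ = Σ_{j=0}^{N} (−1)^j · (B_j(0)/j!) · Q^j is invertible. -/

import Mathlib

open scoped BigOperators Kronecker

/-- The `n`-th Bernoulli polynomial evaluated at `t : ℝ`. -/
noncomputable def B (n : ℕ) (t : ℝ) : ℝ :=
  Polynomial.aeval t (Polynomial.bernoulli n)

/-- The `(N+1) × (N+1)` matrix `P` whose only nonzero entries are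
`P 0 j = -B (j+1) 0 / (j+1)` for `0 ≤ j ≤ N-1` and `P (j+1) j = 1/(j+1)` for `0 ≤ j ≤ N-1`. -/
noncomputable def Pmat (N : ℕ) : Matrix (Fin (N + 1)) (Fin (N + 1)) ℝ :=
  Matrix.of fun i j =>
    if (i : ℕ) = 0 then
      (if (j : ℕ) < N then -(B ((j : ℕ) + 1) 0) / ((j : ℕ) + 1) else 0)
    else if (i : ℕ) = (j : ℕ) + 1 then 1 / ((j : ℕ) + 1) else 0

lemma B_zero : B 0 0 = 1 := by simp [B, Polynomial.bernoulli_zero]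

lemma scalar_id (s : ℕ) :
    ((-1:ℝ)^(s+1)/(s+1).factorial) = -(1/((s:ℝ)+1)) * ((-1)^s/s.factorial) := by
  have h : ((s.factorial : ℝ)) ≠ 0 := Nat.cast_ne_zero.2 s.factorial_ne_zero
  have h2 : ((s:ℝ)+1) ≠ 0 := by positivity
  rw [Nat.factorial_succ]
  push_cast
  field_simp
  ring

lemma coeff_id (s : ℕ) :
    ((-1:ℝ)^(s+1) * B (s+1) 0 / (s+1).factorial)
      = (-(B (s+1) 0)/((s:ℝ)+1)) * ((-1)^s/s.factorial) := by
  have h : ((s.factorial : ℝ)) ≠ 0 := Nat.cast_ne_zero.2 s.factorial_ne_zero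
  have h2 : ((s:ℝ)+1) ≠ 0 := by positivity
  rw [Nat.factorial_succ]
  push_cast
  field_simp
  ring

lemma sum_mulVec' {n m : Type*} [Fintype m] {s : Finset n} (f : n → Matrix m m ℝ)
    (v : m → ℝ) (a : m) :
    ((∑ i ∈ s, f i).mulVec v) a = ∑ i ∈ s, ((f i).mulVec v) a := by
  simp [Matrix.mulVec, dotProduct, Matrix.sum_apply, Finset.sum_mul]
  rw [Finset.sum_comm]

lemma kron_mulVec (N k : ℕ) (Q : Matrix (Fin k) (Fin k) ℝ)
    (x : Fin (N+1) × Fin k → ℝ) (i : Fin (N+1)) (a : Fin k) :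
    ((Pmat N ⊗ₖ Q).mulVec x) (i, a)
      = ∑ j : Fin (N+1), Pmat N i j * ((Q.mulVec fun b => x (j, b)) a) := by
  simp [Matrix.mulVec, dotProduct, Fintype.sum_prod_type,
    Matrix.kroneckerMap_apply, Finset.mul_sum, mul_assoc]

lemma row_succ (N : ℕ) (s : ℕ) (hs : s + 1 < N + 1) (g : Fin (N+1) → ℝ) :
    ∑ j : Fin (N+1), Pmat N ⟨s+1, hs⟩ j * g j
      = (1/((s:ℝ)+1)) * g ⟨s, by omega⟩ := by
  rw [Finset.sum_eq_single (⟨s, by omega⟩ : Fin (N+1))]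
  · simp [Pmat]
  · intro j _ hj
    have : s + 1 ≠ (j : ℕ) + 1 := by
      intro h
      exact hj (by apply Fin.ext; simp; omega)
    simp [Pmat, this]
    intro h
    exact (hj (Fin.ext h.symm)).elim
  · simp

lemma T_eq (N k : ℕ) (Q : Matrix (Fin k) (Fin k) ℝ) :
    (∑ j ∈ Finset.range (N + 1),
        ((-1 : ℝ) ^ j * B j 0 / (j.factorial : ℝ)) • Q ^ j)
      = 1 + ∑ j : Fin (N+1),
          ((if (j:ℕ) < N then -(B ((j:ℕ)+1) 0)/((j:ℕ)+1) else 0)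
            * ((-1:ℝ)^(j:ℕ)/((j:ℕ).factorial))) • Q^((j:ℕ)+1) := by
  rw [Fin.sum_univ_eq_sum_range (fun j =>
      ((if j < N then -(B (j+1) 0)/((j:ℝ)+1) else 0)
        * ((-1:ℝ)^j/(j.factorial))) • Q^(j+1))]
  rw [Finset.sum_range_succ (fun j =>
      ((if j < N then -(B (j+1) 0)/((j:ℝ)+1) else 0)
        * ((-1:ℝ)^j/(j.factorial))) • Q^(j+1)) N]
  rw [Finset.sum_range_succ' (fun j => ((-1 : ℝ) ^ j * B j 0 / (j.factorial : ℝ)) • Q ^ j) N]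
  simp only [lt_irrefl, if_neg, pow_zero, Nat.factorial_zero, B_zero]
  norm_num
  rw [add_comm]
  congr 1
  apply Finset.sum_congr rfl
  intro j hj
  rw [if_pos (Finset.mem_range.mp hj), coeff_id]

lemma dirA (N k : ℕ) (Q : Matrix (Fin k) (Fin k) ℝ) (v : Fin k → ℝ) (hv : v ≠ 0)
    (h : (∑ j ∈ Finset.range (N + 1),
        ((-1:ℝ)^j * B j 0 / (j.factorial : ℝ)) • Q ^ j).mulVec v = 0) :
    ∃ x ≠ 0, ((1 : Matrix (Fin (N+1) × Fin k) (Fin (N+1) × Fin k) ℝ)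
        + Pmat N ⊗ₖ Q).mulVec x = 0 := by
  refine ⟨fun p => ((((-1:ℝ)^(p.1:ℕ)/(((p.1:ℕ).factorial : ℝ))) • Q^(p.1:ℕ)).mulVec v) p.2,
    ?_, ?_⟩
  · intro h0
    apply hv
    funext a
    have := congrFun h0 (⟨0, by omega⟩, a)
    simpa using this
  · funext p
    obtain ⟨⟨i, hi⟩, a⟩ := p
    rw [Matrix.add_mulVec, Matrix.one_mulVec, Pi.add_apply, kron_mulVec, Pi.zero_apply]
    have hQ : ∀ j : Fin (N+1),
        (Q.mulVec fun b =>
          ((((-1:ℝ)^(j:ℕ)/(((j:ℕ).factorial : ℝ))) • Q^(j:ℕ)).mulVec v) b)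
        = ((((-1:ℝ)^(j:ℕ)/(((j:ℕ).factorial : ℝ))) • Q^((j:ℕ)+1)).mulVec v) := by
      intro j
      rw [show (fun b =>
          ((((-1:ℝ)^(j:ℕ)/(((j:ℕ).factorial : ℝ))) • Q^(j:ℕ)).mulVec v) b)
        = ((((-1:ℝ)^(j:ℕ)/(((j:ℕ).factorial : ℝ))) • Q^(j:ℕ)).mulVec v) from rfl]
      rw [Matrix.mulVec_mulVec, Matrix.mul_smul, ← pow_succ']
    simp only [hQ]
    match i, hi with
    | 0, hi =>
      have h0 := congrFun h a
      rw [T_eq, Matrix.add_mulVec, Matrix.one_mulVec, Pi.add_apply, Pi.zero_apply,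
        sum_mulVec'] at h0
      simp only [Matrix.smul_mulVec, Pi.smul_apply, smul_eq_mul, mul_assoc] at h0
      simp only [Pmat, Matrix.of_apply, Fin.val_mk, Matrix.smul_mulVec,
        Pi.smul_apply, smul_eq_mul, mul_assoc, pow_zero, Nat.factorial_zero,
        Nat.cast_one, div_one, one_smul, Matrix.one_mulVec, if_pos rfl]
      exact h0
    | s+1, hi =>
      rw [row_succ N s hi]
      simp only [Matrix.smul_mulVec, Pi.smul_apply, smul_eq_mul, Fin.val_mk]
      rw [scalar_id]
      ring

lemma dirB (N k : ℕ) (Q : Matrix (Fin k) (Fin k) ℝ)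
    (x : Fin (N+1) × Fin k → ℝ) (hx : x ≠ 0)
    (h : ((1 : Matrix (Fin (N+1) × Fin k) (Fin (N+1) × Fin k) ℝ)
        + Pmat N ⊗ₖ Q).mulVec x = 0) :
    ∃ v ≠ 0, (∑ j ∈ Finset.range (N + 1),
        ((-1:ℝ)^j * B j 0 / (j.factorial : ℝ)) • Q ^ j).mulVec v = 0 := by
  set v : Fin k → ℝ := fun a => x (⟨0, by omega⟩, a) with hvdef
  have hrow : ∀ (i : Fin (N+1)) (a : Fin k),
      x (i, a) + ∑ j : Fin (N+1), Pmat N i j * ((Q.mulVec fun b => x (j, b)) a) = 0 := by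
    intro i a
    have := congrFun h (i, a)
    rw [Matrix.add_mulVec, Matrix.one_mulVec, Pi.add_apply, Pi.zero_apply,
      kron_mulVec] at this
    exact this
  have key : ∀ (s : ℕ) (hs : s < N + 1),
      (fun a => x (⟨s, hs⟩, a))
        = ((((-1:ℝ)^s/((s.factorial : ℝ))) • Q^s).mulVec v) := by
    intro s
    induction s with
    | zero =>
      intro hs
      funext a
      simp [hvdef]
    | succ s ih =>
      intro hs
      have hs' : s < N + 1 := by omega
      funext a
      have hr := hrow ⟨s+1, hs⟩ a
      rw [row_succ N s hs] at hr
      have : (fun b => x ((⟨s, by omega⟩ : Fin (N+1)), b))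
          = ((((-1:ℝ)^s/((s.factorial : ℝ))) • Q^s).mulVec v) := ih hs'
      rw [this, Matrix.mulVec_mulVec, Matrix.mul_smul, ← pow_succ'] at hr
      simp only [Matrix.smul_mulVec, Pi.smul_apply, smul_eq_mul] at hr
      simp only [Matrix.smul_mulVec, Pi.smul_apply, smul_eq_mul, scalar_id]
      linarith
  refine ⟨v, ?_, ?_⟩
  · intro hv0
    apply hx
    funext p
    obtain ⟨⟨s, hs⟩, a⟩ := p
    have := congrFun (key s hs) a
    rw [this, hv0, Matrix.mulVec_zero, Pi.zero_apply]
    rfl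
  · funext a
    rw [T_eq, Matrix.add_mulVec, Matrix.one_mulVec, Pi.add_apply, Pi.zero_apply,
      sum_mulVec']
    have hr := hrow ⟨0, by omega⟩ a
    have hterm : ∀ j : Fin (N+1),
        (Q.mulVec fun b => x (j, b))
          = ((((-1:ℝ)^(j:ℕ)/(((j:ℕ).factorial : ℝ))) • Q^((j:ℕ)+1)).mulVec v) := by
      intro j
      have hj : (fun b => x (j, b))
          = ((((-1:ℝ)^(j:ℕ)/(((j:ℕ).factorial : ℝ))) • Q^(j:ℕ)).mulVec v) := by
        have := key (j:ℕ) j.isLt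
        simpa using this
      rw [hj, Matrix.mulVec_mulVec, Matrix.mul_smul, ← pow_succ']
    simp only [hterm] at hr
    simp only [Pmat, Matrix.of_apply, Fin.val_mk, Matrix.smul_mulVec,
      Pi.smul_apply, smul_eq_mul, mul_assoc, if_pos rfl] at hr
    simp only [Matrix.smul_mulVec, Pi.smul_apply, smul_eq_mul, mul_assoc]
    exact hr

theorem H_invertible_iff_T1_invertible (N k : ℕ) (hN : 1 ≤ N) (hk : 1 ≤ k)
    (Q : Matrix (Fin k) (Fin k) ℝ) :
    IsUnit ((1 : Matrix (Fin (N + 1) × Fin k) (Fin (N + 1) × Fin k) ℝ) + Pmat N ⊗ₖ Q) ↔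
      IsUnit (∑ j ∈ Finset.range (N + 1),
        ((-1 : ℝ) ^ j * B j 0 / (j.factorial : ℝ)) • Q ^ j) := by
  rw [Matrix.isUnit_iff_isUnit_det, Matrix.isUnit_iff_isUnit_det,
    isUnit_iff_ne_zero, isUnit_iff_ne_zero, ne_eq, ne_eq,
    ← Matrix.exists_mulVec_eq_zero_iff, ← Matrix.exists_mulVec_eq_zero_iff]
  apply not_congr
  constructor
  · rintro ⟨x, hx, hxz⟩
    exact dirB N k Q x hx hxz
  · rintro ⟨v, hv, hvz⟩
    exact dirA N k Q v hv hvz
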